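/- For two lattice segments P₁ = [0, a]·u and P₂ = [0, b]·v in ℝ² with u, v primitive lattice vectors and a, b positive integers, the discrete mixed volume DMV(P₁, P₂) = |(P₁+P₂) ∩ ℤ²| − |P₁ ∩ ℤ²| − |P₂ ∩ ℤ²| + 1 equals a·b·|det(u, v)|, the mixed volume of the two segments. -/
import Mathlib


open Pointwise

/-- Number of lattice points (points with all integer coordinates) of a set in `ℝⁿ`. -/
noncomputable def latticePts {n : ℕ} (S : Set (Fin n → ℝ)) : ℕ :=
  Set.ncard {x ∈ S | ∀ i, ∃ m : ℤ, x i = (m : ℝ)}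

/-- A lattice polytope: the convex hull of a nonempty finite set of lattice points. -/
def IsLatticePolytope {n : ℕ} (S : Set (Fin n → ℝ)) : Prop :=
  ∃ V : Finset (Fin n → ℝ), V.Nonempty ∧ (∀ x ∈ V, ∀ i, ∃ m : ℤ, x i = (m : ℝ)) ∧
    S = convexHull ℝ (V : Set (Fin n → ℝ))

/-- The discrete mixed volume of `k` polytopes in `ℝⁿ`:
`DMV(P₁,…,P_k) = ∑_{I ⊆ [k]} (−1)^{k−|I|} |P_I ∩ ℤⁿ|`,
where `P_I` is the Minkowski sum `∑_{i∈I} P_i` and `P_∅ = {0}`. -/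
noncomputable def DMV {n k : ℕ} (P : Fin k → Set (Fin n → ℝ)) : ℤ :=
  ∑ I : Finset (Fin k), (-1 : ℤ) ^ (k - I.card) * (latticePts (∑ i ∈ I, P i) : ℤ)

/-- Dimension of a polytope: dimension of (the direction of) its affine hull. -/
noncomputable def polyDim {n : ℕ} (S : Set (Fin n → ℝ)) : ℕ :=
  Module.finrank ℝ (affineSpan ℝ S).direction

/-! ### Auxiliary lemmas -/

lemma intc (c : ℝ) (u : Fin 2 → ℤ) (hu : Int.gcd (u 0) (u 1) = 1)
    (h0 : ∃ m : ℤ, c * u 0 = m) (h1 : ∃ m : ℤ, c * u 1 = m) : ∃ m : ℤ, c = m := by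
  obtain ⟨m0, hm0⟩ := h0
  obtain ⟨m1, hm1⟩ := h1
  set A := Int.gcdA (u 0) (u 1) with hA
  set B := Int.gcdB (u 0) (u 1) with hB
  have hg : ((Int.gcd (u 0) (u 1) : ℤ)) = u 0 * A + u 1 * B := Int.gcd_eq_gcd_ab _ _
  rw [hu] at hg
  have hgR : (u 0 : ℝ) * A + (u 1 : ℝ) * B = 1 := by exact_mod_cast hg.symm
  refine ⟨m0 * A + m1 * B, ?_⟩
  push_cast
  linear_combination (A : ℝ) * hm0 + (B : ℝ) * hm1 - c * hgR

lemma u_ne (u : Fin 2 → ℤ) (hu : Int.gcd (u 0) (u 1) = 1) : u 0 ≠ 0 ∨ u 1 ≠ 0 := by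
  by_contra h
  push_neg at h
  rw [h.1, h.2] at hu
  simp at hu

lemma smul_inj (u : Fin 2 → ℤ) (hu : Int.gcd (u 0) (u 1) = 1) :
    Function.Injective (fun m : ℤ => (m : ℝ) • (fun i => (u i : ℝ))) := by
  intro m m' h
  rcases u_ne u hu with h0 | h0
  · have h2 := congrFun h 0
    simp only [Pi.smul_apply, smul_eq_mul] at h2
    have : (m : ℝ) = m' := mul_right_cancel₀ (by exact_mod_cast h0) h2
    exact_mod_cast this
  · have h2 := congrFun h 1
    simp only [Pi.smul_apply, smul_eq_mul] at h2
    have : (m : ℝ) = m' := mul_right_cancel₀ (by exact_mod_cast h0) h2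
    exact_mod_cast this

lemma mem_seg (u : Fin 2 → ℤ) (a : ℕ) (ha : 0 < a) (x : Fin 2 → ℝ) :
    x ∈ convexHull ℝ {0, (a : ℝ) • (fun i => (u i : ℝ))} ↔
      ∃ s : ℝ, 0 ≤ s ∧ s ≤ a ∧ x = s • (fun i => (u i : ℝ)) := by
  have haR : (0 : ℝ) < a := by exact_mod_cast ha
  rw [convexHull_pair, segment_eq_image]
  constructor
  · rintro ⟨θ, hθ, rfl⟩
    simp only [Set.mem_Icc] at hθ
    refine ⟨θ * a, mul_nonneg hθ.1 haR.le, ?_, ?_⟩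
    · calc θ * a ≤ 1 * a := by nlinarith [hθ.2]
        _ = a := one_mul _
    · simp only [smul_zero, zero_add, smul_smul]
  · rintro ⟨s, hs0, hsa, rfl⟩
    refine ⟨s / a, Set.mem_Icc.2 ⟨by positivity, by rw [div_le_one haR]; exact hsa⟩, ?_⟩
    simp only [smul_zero, zero_add, smul_smul]
    rw [div_mul_cancel₀ _ haR.ne']

lemma seg_lattice_eq (u : Fin 2 → ℤ) (hu : Int.gcd (u 0) (u 1) = 1) (a : ℕ) (ha : 0 < a) :
    {x ∈ convexHull ℝ {0, (a : ℝ) • (fun i => (u i : ℝ))} | ∀ i, ∃ m : ℤ, x i = (m : ℝ)}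
      = (fun m : ℤ => (m : ℝ) • (fun i => (u i : ℝ))) '' ↑(Finset.Icc (0 : ℤ) a) := by
  ext x
  simp only [Set.mem_setOf_eq, Set.mem_image, Finset.coe_Icc, Set.mem_Icc]
  constructor
  · rintro ⟨hx, hint⟩
    rw [mem_seg u a ha] at hx
    obtain ⟨s, hs0, hsa, rfl⟩ := hx
    have h0 := hint 0
    have h1 := hint 1
    simp only [Pi.smul_apply, smul_eq_mul] at h0 h1
    obtain ⟨m, rfl⟩ := intc s u hu h0 h1
    refine ⟨m, ⟨?_, ?_⟩, rfl⟩
    · exact_mod_cast hs0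
    · exact_mod_cast hsa
  · rintro ⟨m, ⟨hm0, hma⟩, rfl⟩
    constructor
    · rw [mem_seg u a ha]
      exact ⟨m, by exact_mod_cast hm0, by exact_mod_cast hma, rfl⟩
    · intro i
      exact ⟨m * u i, by simp [Pi.smul_apply]⟩

lemma seg_count (u : Fin 2 → ℤ) (hu : Int.gcd (u 0) (u 1) = 1) (a : ℕ) (ha : 0 < a) :
    latticePts (convexHull ℝ {0, (a : ℝ) • (fun i => (u i : ℝ))}) = a + 1 := by
  rw [latticePts, seg_lattice_eq u hu a ha,
    Set.ncard_image_of_injective _ (smul_inj u hu), Set.ncard_coe_finset, Int.card_Icc]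
  simp

lemma lat_zero : latticePts (0 : Set (Fin 2 → ℝ)) = 1 := by
  have : {x ∈ (0 : Set (Fin 2 → ℝ)) | ∀ i, ∃ m : ℤ, x i = (m : ℝ)} = {0} := by
    ext x
    simp only [Set.mem_setOf_eq, Set.mem_zero, Set.mem_singleton_iff]
    constructor
    · rintro ⟨h, _⟩; exact h
    · rintro rfl; exact ⟨rfl, fun i => ⟨0, by simp⟩⟩
  rw [latticePts, this, Set.ncard_singleton]

lemma DMV_two (P₁ P₂ : Set (Fin 2 → ℝ)) :
    DMV ![P₁, P₂] = (latticePts (P₁ + P₂) : ℤ) - latticePts P₁ - latticePts P₂ + 1 := by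
  rw [DMV]
  rw [show (Finset.univ : Finset (Finset (Fin 2))) = {∅, {0}, {1}, Finset.univ} from by decide]
  rw [Finset.sum_insert (by decide), Finset.sum_insert (by decide),
    Finset.sum_insert (by decide), Finset.sum_singleton]
  simp only [Finset.sum_empty, Finset.card_empty, Finset.card_singleton, Finset.card_univ,
    Fintype.card_fin, Finset.sum_singleton, Fin.sum_univ_two,
    Matrix.cons_val_zero, Matrix.cons_val_one, Matrix.head_cons]
  rw [lat_zero]
  ring

lemma count_dvd (D : ℤ) (hD : 0 < D) (b : ℕ) (r : ℤ) :
    (((Finset.Icc (0 : ℤ) (b * D)).filter (fun q => D ∣ q - r)).card : ℤ)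
      = b + (if D ∣ r then 1 else 0) := by
  set r' := r % D with hr'
  have hdvd_iff : ∀ q : ℤ, (D ∣ q - r ↔ D ∣ q - r') := by
    intro q
    have h1 : D ∣ r - r' := Int.dvd_self_sub_of_emod_eq rfl
    constructor
    · intro h; have := dvd_add h h1; simpa using this
    · intro h; have := dvd_sub h h1; simpa using this
  rw [Finset.filter_congr (fun q _ => by rw [hdvd_iff q])]
  have hrd : (D ∣ r) ↔ r' = 0 := by
    rw [hr']
    exact ⟨fun h => Int.emod_eq_zero_of_dvd h, fun h => Int.dvd_of_emod_eq_zero h⟩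
  by_cases h0 : r' = 0
  · rw [if_pos (hrd.2 h0), h0]
    have himg : (Finset.Icc (0 : ℤ) (b * D)).filter (fun q => D ∣ q - 0)
        = Finset.image (fun j : ℤ => j * D) (Finset.Icc (0 : ℤ) b) := by
      ext q
      simp only [Finset.mem_filter, Finset.mem_Icc, Finset.mem_image, sub_zero]
      constructor
      · rintro ⟨⟨hq0, hqb⟩, ⟨j, rfl⟩⟩
        refine ⟨j, ⟨?_, ?_⟩, by ring⟩
        · exact le_of_mul_le_mul_left (by simpa using hq0) hD
        · exact le_of_mul_le_mul_left (by linarith) hD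
      · rintro ⟨j, ⟨hj0, hjb⟩, rfl⟩
        exact ⟨⟨mul_nonneg hj0 hD.le, mul_le_mul_of_nonneg_right hjb hD.le⟩, ⟨j, by ring⟩⟩
    rw [himg, Finset.card_image_of_injective _ (fun x y h => by
      exact mul_right_cancel₀ hD.ne' h), Int.card_Icc]
    simp
  · rw [if_neg (fun h => h0 (hrd.1 h))]
    have hr0 : 0 < r' := lt_of_le_of_ne (Int.emod_nonneg r hD.ne') (Ne.symm h0)
    have hrD : r' < D := Int.emod_lt_of_pos r hD
    have himg : (Finset.Icc (0 : ℤ) (b * D)).filter (fun q => D ∣ q - r')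
        = Finset.image (fun j : ℤ => j * D + r') (Finset.Icc (0 : ℤ) ((b : ℤ) - 1)) := by
      ext q
      simp only [Finset.mem_filter, Finset.mem_Icc, Finset.mem_image]
      constructor
      · rintro ⟨⟨hq0, hqb⟩, ⟨j, hj⟩⟩
        refine ⟨j, ⟨?_, ?_⟩, by linarith⟩
        · nlinarith
        · nlinarith
      · rintro ⟨j, ⟨hj0, hjb⟩, rfl⟩
        refine ⟨⟨by nlinarith, by nlinarith⟩, ⟨j, by ring⟩⟩
    rw [himg, Finset.card_image_of_injective _ (fun x y h => by
      have h2 : x * D = y * D := by linarith [h]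
      exact mul_right_cancel₀ hD.ne' h2), Int.card_Icc]
    simp

lemma bezout (v : Fin 2 → ℤ) (hv : Int.gcd (v 0) (v 1) = 1) :
    ∃ α β : ℤ, v 0 * α + v 1 * β = 1 := by
  refine ⟨Int.gcdA (v 0) (v 1), Int.gcdB (v 0) (v 1), ?_⟩
  have := Int.gcd_eq_gcd_ab (v 0) (v 1)
  rw [hv] at this
  exact_mod_cast this.symm

lemma key_iff (u v : Fin 2 → ℤ) (α β : ℤ) (hab : v 0 * α + v 1 * β = 1) (p q : ℤ) :
    (u 0 * v 1 - u 1 * v 0 ∣ p * u 0 + q * v 0 ∧ u 0 * v 1 - u 1 * v 0 ∣ p * u 1 + q * v 1)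
      ↔ (u 0 * v 1 - u 1 * v 0) ∣ q - (-(p * (α * u 0 + β * u 1))) := by
  set D := u 0 * v 1 - u 1 * v 0 with hDdef
  set k := α * u 0 + β * u 1 with hkdef
  constructor
  · rintro ⟨⟨c0, hc0⟩, ⟨c1, hc1⟩⟩
    exact ⟨α * c0 + β * c1, by linear_combination α * hc0 + β * hc1 - q * hab⟩
  · rintro ⟨c, hc⟩
    constructor
    · exact ⟨v 0 * c + p * β, by linear_combination v 0 * hc - p * u 0 * hab⟩
    · exact ⟨v 1 * c - p * α, by linear_combination v 1 * hc - p * u 1 * hab⟩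

lemma k_coprime (u v : Fin 2 → ℤ) (hu : Int.gcd (u 0) (u 1) = 1) (α β : ℤ)
    (hab : v 0 * α + v 1 * β = 1) :
    IsCoprime (u 0 * v 1 - u 1 * v 0) (α * u 0 + β * u 1) := by
  obtain ⟨γ, δ, hgd⟩ := bezout u hu
  exact ⟨γ * β - δ * α, γ * v 0 + δ * v 1,
    by linear_combination hgd + (γ * u 0 + δ * u 1) * hab⟩

lemma prod_filter_card (s t : Finset ℤ) (P : ℤ → ℤ → Prop)
    [DecidablePred fun x : ℤ × ℤ => P x.1 x.2] [∀ p, DecidablePred (P p)] :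
    ((s ×ˢ t).filter (fun x : ℤ × ℤ => P x.1 x.2)).card
      = ∑ p ∈ s, (t.filter (P p)).card := by
  classical
  rw [Finset.card_eq_sum_card_fiberwise (f := Prod.fst) (t := s)
    (fun x hx => (Finset.mem_product.1 (Finset.mem_filter.1 hx).1).1)]
  refine Finset.sum_congr rfl (fun p hp => ?_)
  refine Finset.card_bij (fun x _ => x.2) ?_ ?_ ?_
  · rintro ⟨p', q⟩ hx
    simp only [Finset.mem_filter, Finset.mem_product] at hx
    obtain ⟨⟨⟨_, hq⟩, hP⟩, rfl⟩ := hx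
    exact Finset.mem_filter.2 ⟨hq, hP⟩
  · rintro ⟨p1, q1⟩ h1 ⟨p2, q2⟩ h2 h
    simp only [Finset.mem_filter] at h1 h2
    simp only at h
    rw [Prod.ext_iff]
    exact ⟨h1.2.trans h2.2.symm, h⟩
  · intro q hq
    simp only [Finset.mem_filter] at hq
    exact ⟨(p, q), Finset.mem_filter.2 ⟨Finset.mem_filter.2
      ⟨Finset.mem_product.2 ⟨hp, hq.1⟩, hq.2⟩, rfl⟩, rfl⟩

lemma F_card (D k : ℤ) (hD : 0 < D) (hk : IsCoprime D k) (a b : ℕ) :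
    ((((Finset.Icc (0 : ℤ) (a * D)) ×ˢ (Finset.Icc (0 : ℤ) (b * D))).filter
      (fun pq : ℤ × ℤ => D ∣ pq.2 - (-(pq.1 * k)))).card : ℤ)
      = a * b * D + a + b + 1 := by
  classical
  rw [prod_filter_card _ _ (fun p q => D ∣ q - (-(p * k)))]
  rw [Nat.cast_sum]
  have step : ∀ p ∈ Finset.Icc (0 : ℤ) (a * D),
      (((Finset.Icc (0 : ℤ) (b * D)).filter (fun q => D ∣ q - (-(p * k)))).card : ℤ)
        = b + (if D ∣ p then 1 else 0) := by
    intro p hp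
    rw [count_dvd D hD b]
    congr 1
    have hiff : (D ∣ -(p * k)) ↔ D ∣ p := by
      constructor
      · intro h
        exact hk.dvd_of_dvd_mul_right (dvd_neg.1 h)
      · intro h
        exact dvd_neg.2 (h.mul_right k)
    simp only [hiff]
  rw [Finset.sum_congr rfl step]
  rw [Finset.sum_add_distrib, Finset.sum_const]
  have h2 : ((((Finset.Icc (0:ℤ) (a*D)).filter (fun q => D ∣ q - 0)).card : ℤ)) = a + 1 := by
    rw [count_dvd D hD a 0]
    simp
  have h3 : (∑ x ∈ Finset.Icc (0:ℤ) (a*D), if D ∣ x then (1:ℤ) else 0) = a + 1 := by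
    rw [← h2, Finset.card_filter]
    push_cast
    refine Finset.sum_congr rfl fun x _ => by simp [sub_zero]
  have h4 : (((Finset.Icc (0:ℤ) (a*D)).card : ℤ)) = a*D + 1 := by
    rw [Int.card_Icc]
    rw [Int.toNat_of_nonneg (by nlinarith [mul_nonneg (Int.natCast_nonneg a) hD.le])]
    ring
  rw [h3, nsmul_eq_mul, h4]
  ring

lemma mem_sum (u v : Fin 2 → ℤ) (a b : ℕ) (ha : 0 < a) (hb : 0 < b) (x : Fin 2 → ℝ) :
    x ∈ convexHull ℝ {0, (a : ℝ) • (fun i => (u i : ℝ))} +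
        convexHull ℝ {0, (b : ℝ) • (fun i => (v i : ℝ))} ↔
      ∃ s t : ℝ, 0 ≤ s ∧ s ≤ a ∧ 0 ≤ t ∧ t ≤ b ∧
        x = s • (fun i => (u i : ℝ)) + t • (fun i => (v i : ℝ)) := by
  rw [Set.mem_add]
  constructor
  · rintro ⟨y, hy, z, hz, rfl⟩
    obtain ⟨s, hs0, hsa, rfl⟩ := (mem_seg u a ha y).1 hy
    obtain ⟨t, ht0, htb, rfl⟩ := (mem_seg v b hb z).1 hz
    exact ⟨s, t, hs0, hsa, ht0, htb, rfl⟩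
  · rintro ⟨s, t, hs0, hsa, ht0, htb, rfl⟩
    exact ⟨_, (mem_seg u a ha _).2 ⟨s, hs0, hsa, rfl⟩,
           _, (mem_seg v b hb _).2 ⟨t, ht0, htb, rfl⟩, rfl⟩

lemma para_count (u v : Fin 2 → ℤ) (hu : Int.gcd (u 0) (u 1) = 1)
    (hv : Int.gcd (v 0) (v 1) = 1) (a b : ℕ) (ha : 0 < a) (hb : 0 < b)
    (hD : 0 < u 0 * v 1 - u 1 * v 0) :
    (latticePts (convexHull ℝ {0, (a : ℝ) • (fun i => (u i : ℝ))} +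
        convexHull ℝ {0, (b : ℝ) • (fun i => (v i : ℝ))}) : ℤ)
      = a * b * (u 0 * v 1 - u 1 * v 0) + a + b + 1 := by
  classical
  set D : ℤ := u 0 * v 1 - u 1 * v 0 with hDdef
  have hDR : (0 : ℝ) < (D : ℝ) := by exact_mod_cast hD
  set g : ℤ × ℤ → (Fin 2 → ℝ) :=
    fun pq => fun i => ((pq.1 * u i + pq.2 * v i : ℤ) : ℝ) / (D : ℝ) with hgdef
  set F : Finset (ℤ × ℤ) :=
    ((Finset.Icc (0 : ℤ) (a * D)) ×ˢ (Finset.Icc (0 : ℤ) (b * D))).filter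
      (fun pq : ℤ × ℤ => D ∣ pq.1 * u 0 + pq.2 * v 0 ∧ D ∣ pq.1 * u 1 + pq.2 * v 1) with hFdef
  have hinj : Function.Injective g := by
    rintro ⟨p, q⟩ ⟨p', q'⟩ h
    have h0 : p * u 0 + q * v 0 = p' * u 0 + q' * v 0 := by
      have := congrFun h 0
      simp only [hgdef] at this
      rw [div_eq_div_iff hDR.ne' hDR.ne'] at this
      have h2 := mul_right_cancel₀ hDR.ne' this
      exact_mod_cast h2
    have h1 : p * u 1 + q * v 1 = p' * u 1 + q' * v 1 := by
      have := congrFun h 1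
      simp only [hgdef] at this
      rw [div_eq_div_iff hDR.ne' hDR.ne'] at this
      have h2 := mul_right_cancel₀ hDR.ne' this
      exact_mod_cast h2
    have hp : p * D = p' * D := by linear_combination v 1 * h0 - v 0 * h1
    have hq : q * D = q' * D := by linear_combination u 0 * h1 - u 1 * h0
    have hp' : p = p' := mul_right_cancel₀ hD.ne' hp
    have hq' : q = q' := mul_right_cancel₀ hD.ne' hq
    simp [hp', hq']
  have hset : {x ∈ convexHull ℝ {0, (a : ℝ) • (fun i => (u i : ℝ))} +
        convexHull ℝ {0, (b : ℝ) • (fun i => (v i : ℝ))} | ∀ i, ∃ m : ℤ, x i = (m : ℝ)}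
      = g '' ↑F := by
    ext x
    simp only [Set.mem_setOf_eq, Set.mem_image, Finset.mem_coe]
    constructor
    · rintro ⟨hmem, hint⟩
      obtain ⟨s, t, hs0, hsa, ht0, htb, rfl⟩ := (mem_sum u v a b ha hb x).1 hmem
      obtain ⟨m0, hm0⟩ := hint 0
      obtain ⟨m1, hm1⟩ := hint 1
      simp only [Pi.add_apply, Pi.smul_apply, smul_eq_mul] at hm0 hm1
      refine ⟨(v 1 * m0 - v 0 * m1, u 0 * m1 - u 1 * m0), ?_, ?_⟩
      · have hpR : ((v 1 * m0 - v 0 * m1 : ℤ) : ℝ) = s * D := by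
          push_cast [hDdef]
          linear_combination (v 1 : ℝ) * hm0.symm - (v 0 : ℝ) * hm1.symm
        have hqR : ((u 0 * m1 - u 1 * m0 : ℤ) : ℝ) = t * D := by
          push_cast [hDdef]
          linear_combination (u 0 : ℝ) * hm1.symm - (u 1 : ℝ) * hm0.symm
        rw [hFdef, Finset.mem_filter, Finset.mem_product, Finset.mem_Icc, Finset.mem_Icc]
        refine ⟨⟨⟨?_, ?_⟩, ?_, ?_⟩, ?_, ?_⟩
        · have : (0 : ℝ) ≤ ((v 1 * m0 - v 0 * m1 : ℤ) : ℝ) := by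
            rw [hpR]; exact mul_nonneg hs0 hDR.le
          exact_mod_cast this
        · have : ((v 1 * m0 - v 0 * m1 : ℤ) : ℝ) ≤ ((a * D : ℤ) : ℝ) := by
            rw [hpR]; push_cast; exact mul_le_mul_of_nonneg_right hsa hDR.le
          exact_mod_cast this
        · have : (0 : ℝ) ≤ ((u 0 * m1 - u 1 * m0 : ℤ) : ℝ) := by
            rw [hqR]; exact mul_nonneg ht0 hDR.le
          exact_mod_cast this
        · have : ((u 0 * m1 - u 1 * m0 : ℤ) : ℝ) ≤ ((b * D : ℤ) : ℝ) := by
            rw [hqR]; push_cast; exact mul_le_mul_of_nonneg_right htb hDR.le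
          exact_mod_cast this
        · refine ⟨m0, ?_⟩
          have : (((v 1 * m0 - v 0 * m1) * u 0 + (u 0 * m1 - u 1 * m0) * v 0 : ℤ) : ℝ)
              = ((D * m0 : ℤ) : ℝ) := by
            push_cast [hDdef]
            ring
          exact_mod_cast this
        · refine ⟨m1, ?_⟩
          have : (((v 1 * m0 - v 0 * m1) * u 1 + (u 0 * m1 - u 1 * m0) * v 1 : ℤ) : ℝ)
              = ((D * m1 : ℤ) : ℝ) := by
            push_cast [hDdef]
            ring
          exact_mod_cast this
      · funext i
        simp only [hgdef, Pi.add_apply, Pi.smul_apply, smul_eq_mul]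
        rw [div_eq_iff hDR.ne']
        fin_cases i
        · push_cast [hDdef]
          linear_combination (-((u 0 : ℝ) * v 1 - (u 1 : ℝ) * v 0)) * hm0
        · push_cast [hDdef]
          linear_combination (-((u 0 : ℝ) * v 1 - (u 1 : ℝ) * v 0)) * hm1
    · rintro ⟨⟨p, q⟩, hpq, rfl⟩
      rw [hFdef, Finset.mem_filter, Finset.mem_product, Finset.mem_Icc, Finset.mem_Icc] at hpq
      obtain ⟨⟨⟨hp0, hpa⟩, hq0, hqb⟩, ⟨c0, hc0⟩, ⟨c1, hc1⟩⟩ := hpq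
      simp only at hp0 hpa hq0 hqb hc0 hc1
      constructor
      · rw [mem_sum u v a b ha hb]
        refine ⟨(p : ℝ) / D, (q : ℝ) / D,
          div_nonneg (by exact_mod_cast hp0) hDR.le, ?_,
          div_nonneg (by exact_mod_cast hq0) hDR.le, ?_, ?_⟩
        · rw [div_le_iff₀ hDR]
          exact_mod_cast hpa
        · rw [div_le_iff₀ hDR]
          exact_mod_cast hqb
        · funext i
          simp only [hgdef, Pi.add_apply, Pi.smul_apply, smul_eq_mul]
          push_cast
          field_simp
      · intro i
        fin_cases i
        · refine ⟨c0, ?_⟩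
          show ((p * u 0 + q * v 0 : ℤ) : ℝ) / (D : ℝ) = (c0 : ℝ)
          rw [hc0]
          push_cast
          field_simp
        · refine ⟨c1, ?_⟩
          show ((p * u 1 + q * v 1 : ℤ) : ℝ) / (D : ℝ) = (c1 : ℝ)
          rw [hc1]
          push_cast
          field_simp
  rw [latticePts, hset, Set.ncard_image_of_injective _ hinj, Set.ncard_coe_finset]
  obtain ⟨α, β, hab⟩ := bezout v hv
  have hFeq : F = ((Finset.Icc (0 : ℤ) (a * D)) ×ˢ (Finset.Icc (0 : ℤ) (b * D))).filter
      (fun pq : ℤ × ℤ => D ∣ pq.2 - (-(pq.1 * (α * u 0 + β * u 1)))) := by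
    rw [hFdef]
    exact Finset.filter_congr fun pq _ => by
      rw [← key_iff u v α β hab pq.1 pq.2]
  rw [hFeq, F_card D (α * u 0 + β * u 1) hD (k_coprime u v hu α β hab) a b]

lemma interval_count (u : Fin 2 → ℤ) (hu : Int.gcd (u 0) (u 1) = 1) (c d : ℤ)
    (S : Set (Fin 2 → ℝ))
    (hS : ∀ x, x ∈ S ↔ ∃ r : ℝ, (c : ℝ) ≤ r ∧ r ≤ (d : ℝ) ∧ x = r • (fun i => (u i : ℝ))) :
    latticePts S = (d + 1 - c).toNat := by
  have hset : {x ∈ S | ∀ i, ∃ m : ℤ, x i = (m : ℝ)}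
      = (fun m : ℤ => (m : ℝ) • (fun i => (u i : ℝ))) '' ↑(Finset.Icc c d) := by
    ext x
    simp only [Set.mem_setOf_eq, Set.mem_image, Finset.coe_Icc, Set.mem_Icc]
    constructor
    · rintro ⟨hx, hint⟩
      obtain ⟨r, hrc, hrd, rfl⟩ := (hS x).1 hx
      have h0 := hint 0
      have h1 := hint 1
      simp only [Pi.smul_apply, smul_eq_mul] at h0 h1
      obtain ⟨m, rfl⟩ := intc r u hu h0 h1
      exact ⟨m, ⟨by exact_mod_cast hrc, by exact_mod_cast hrd⟩, rfl⟩
    · rintro ⟨m, ⟨hmc, hmd⟩, rfl⟩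
      refine ⟨(hS _).2 ⟨m, by exact_mod_cast hmc, by exact_mod_cast hmd, rfl⟩, ?_⟩
      intro i
      exact ⟨m * u i, by simp [Pi.smul_apply]⟩
  rw [latticePts, hset, Set.ncard_image_of_injective _ (smul_inj u hu),
    Set.ncard_coe_finset, Int.card_Icc]

lemma collinear_scale (u v : Fin 2 → ℤ) (hu : Int.gcd (u 0) (u 1) = 1)
    (hv : Int.gcd (v 0) (v 1) = 1) (hD : u 0 * v 1 - u 1 * v 0 = 0) :
    ∃ e : ℤ, (e = 1 ∨ e = -1) ∧ v 0 = e * u 0 ∧ v 1 = e * u 1 := by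
  obtain ⟨γ, δ, hgd⟩ := bezout u hu
  refine ⟨v 0 * γ + v 1 * δ, ?_, ?_, ?_⟩
  · have h0 : v 0 = (v 0 * γ + v 1 * δ) * u 0 := by
      linear_combination (-(v 0)) * hgd - δ * hD
    have h1 : v 1 = (v 0 * γ + v 1 * δ) * u 1 := by
      linear_combination (-(v 1)) * hgd + γ * hD
    have habs : Int.natAbs (v 0 * γ + v 1 * δ) = 1 := by
      have := Int.gcd_mul_left (v 0 * γ + v 1 * δ) (u 0) (u 1)
      rw [← h0, ← h1, hv, hu, mul_one] at this
      exact this.symm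
    rcases Int.natAbs_eq (v 0 * γ + v 1 * δ) with h | h
    · left; omega
    · right; omega
  · linear_combination (-(v 0)) * hgd - δ * hD
  · linear_combination (-(v 1)) * hgd + γ * hD

lemma collinear_count (u v : Fin 2 → ℤ) (hu : Int.gcd (u 0) (u 1) = 1)
    (a b : ℕ) (ha : 0 < a) (hb : 0 < b) (e : ℤ) (he : e = 1 ∨ e = -1)
    (hv0 : v 0 = e * u 0) (hv1 : v 1 = e * u 1) :
    latticePts (convexHull ℝ {0, (a : ℝ) • (fun i => (u i : ℝ))} +
        convexHull ℝ {0, (b : ℝ) • (fun i => (v i : ℝ))}) = a + b + 1 := by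
  rcases he with rfl | rfl
  · have hvu : (fun i => (v i : ℝ)) = (fun i => (u i : ℝ)) := by
      funext i
      fin_cases i <;> simp [hv0, hv1]
    have hmem : ∀ x : Fin 2 → ℝ, x ∈ convexHull ℝ {0, (a : ℝ) • (fun i => (u i : ℝ))} +
        convexHull ℝ {0, (b : ℝ) • (fun i => (v i : ℝ))} ↔
        ∃ r : ℝ, ((0 : ℤ) : ℝ) ≤ r ∧ r ≤ (((a : ℤ) + b : ℤ) : ℝ) ∧
          x = r • (fun i => (u i : ℝ)) := by
      intro x
      constructor
      · intro hx
        obtain ⟨s, t, hs0, hsa, ht0, htb, rfl⟩ := (mem_sum u v a b ha hb x).1 hx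
        refine ⟨s + t, by push_cast; linarith, by push_cast; linarith, ?_⟩
        rw [hvu, ← add_smul]
      · rintro ⟨r, hr0, hrab, rfl⟩
        rw [mem_sum u v a b ha hb]
        push_cast at hr0 hrab
        refine ⟨min r a, r - min r a, le_min hr0 (by positivity),
          min_le_right _ _, by simp [min_le_left], ?_, ?_⟩
        · rcases le_total r (a : ℝ) with h | h
          · rw [min_eq_left h]
            simp only [sub_self]
            exact_mod_cast hb.le
          · rw [min_eq_right h]; linarith
        · rw [hvu, ← add_smul]
          ring_nf
    rw [interval_count u hu 0 ((a : ℤ) + b) _ hmem]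
    omega
  · have hvu : (fun i => (v i : ℝ)) = -(fun i => (u i : ℝ)) := by
      funext i
      fin_cases i <;> simp [hv0, hv1]
    have hmem : ∀ x : Fin 2 → ℝ, x ∈ convexHull ℝ {0, (a : ℝ) • (fun i => (u i : ℝ))} +
        convexHull ℝ {0, (b : ℝ) • (fun i => (v i : ℝ))} ↔
        ∃ r : ℝ, ((-(b : ℤ) : ℤ) : ℝ) ≤ r ∧ r ≤ (((a : ℤ) : ℤ) : ℝ) ∧
          x = r • (fun i => (u i : ℝ)) := by
      intro x
      constructor
      · intro hx
        obtain ⟨s, t, hs0, hsa, ht0, htb, rfl⟩ := (mem_sum u v a b ha hb x).1 hx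
        refine ⟨s - t, by push_cast; linarith, by push_cast; linarith, ?_⟩
        rw [hvu, smul_neg, ← sub_eq_add_neg, ← sub_smul]
      · rintro ⟨r, hrb, hra, rfl⟩
        rw [mem_sum u v a b ha hb]
        push_cast at hrb hra
        refine ⟨max r 0, max r 0 - r, le_max_right _ _,
          max_le hra (by positivity), by simp, ?_, ?_⟩
        · rcases le_total r 0 with h | h
          · rw [max_eq_right h]; linarith
          · rw [max_eq_left h]
            simp only [sub_self]
            exact_mod_cast hb.le
        · rw [hvu, smul_neg, ← sub_eq_add_neg, ← sub_smul]
          ring_nf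
    rw [interval_count u hu (-(b : ℤ)) ((a : ℤ)) _ hmem]
    omega

/-- For two lattice segments `P₁ = [0,a]·u`, `P₂ = [0,b]·v` in `ℝ²` with `u, v`
primitive lattice vectors and `a, b` positive integers, the discrete mixed volume
equals `a·b·|det(u,v)|`, the mixed volume of the two segments. -/
theorem stmt3 (u v : Fin 2 → ℤ) (hu : Int.gcd (u 0) (u 1) = 1) (hv : Int.gcd (v 0) (v 1) = 1)
    (a b : ℕ) (ha : 0 < a) (hb : 0 < b)
    (P₁ P₂ : Set (Fin 2 → ℝ))
    (hP₁ : P₁ = convexHull ℝ {0, (a : ℝ) • (fun i => (u i : ℝ))})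
    (hP₂ : P₂ = convexHull ℝ {0, (b : ℝ) • (fun i => (v i : ℝ))}) :
    DMV ![P₁, P₂] = (a : ℤ) * b * |u 0 * v 1 - u 1 * v 0| := by
  rw [DMV_two, hP₁, hP₂, seg_count u hu a ha, seg_count v hv b hb]
  rcases lt_trichotomy (u 0 * v 1 - u 1 * v 0) 0 with h | h | h
  · have h' : 0 < v 0 * u 1 - v 1 * u 0 := by linarith
    have hpc := para_count v u hv hu b a hb ha h'
    rw [add_comm (convexHull ℝ {0, (b : ℝ) • (fun i => (v i : ℝ))})] at hpc
    rw [hpc, abs_of_neg h]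
    push_cast
    ring
  · obtain ⟨e, he, hv0, hv1⟩ := collinear_scale u v hu hv h
    rw [collinear_count u v hu a b ha hb e he hv0 hv1, h, abs_zero]
    push_cast
    ring
  · rw [para_count u v hu hv a b ha hb h, abs_of_pos h]
    push_cast
    ring
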